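/- arXiv:2311.11685 — 3 statements merged into one kernel-verified Lean document; each statement's English description precedes it below -/
import Mathlib

section
/- For the Kalton-Peck map K on ℓ₂, defined by K(x) = Σ_j x_j log(|x_j|/‖x‖₂) e_j (with 0·log 0 = 0), one has ‖K(Σ_{j=1}^n e_j)‖₂ = √n · log(√n) and K(e_j) = 0 for each j ≤ n; in particular ‖K(Σ_{j=1}^n e_j) − Σ_{j=1}^n K(e_j)‖₂ = √n log √n. -/
/-- The ℓ₂ norm of a real sequence. -/
noncomputable def l2norm (f : ℕ → ℝ) : ℝ := Real.sqrt (∑' n, (f n)^2)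

/-- The Kalton-Peck map `K(x) = Σ_j x_j log(|x_j|/‖x‖₂) e_j` (with `0·log 0 = 0`,
which is automatic since in Lean `Real.log 0 = 0` and the factor `x i` vanishes). -/
noncomputable def KP (x : ℕ → ℝ) : ℕ → ℝ := fun i => x i * Real.log (|x i| / l2norm x)

/-- The standard unit vector basis of ℓ₂. -/
noncomputable def stdBasis (j : ℕ) : ℕ → ℝ := Pi.single j 1

lemma sum_stdBasis_apply (n i : ℕ) :
    (∑ j ∈ Finset.range n, stdBasis j) i = if i < n then 1 else 0 := by
  rw [Finset.sum_apply]
  simp only [stdBasis, Pi.single_apply]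
  rw [Finset.sum_ite_eq (Finset.range n) i (fun _ => (1:ℝ))]
  simp

lemma l2norm_sum (n : ℕ) :
    l2norm (∑ j ∈ Finset.range n, stdBasis j) = Real.sqrt n := by
  unfold l2norm
  congr 1
  have h : ∀ i ∉ Finset.range n, ((∑ j ∈ Finset.range n, stdBasis j) i)^2 = 0 := by
    intro i hi
    rw [sum_stdBasis_apply]
    simp [Finset.mem_range.not.mp hi]
  rw [tsum_eq_sum h]
  have : ∀ i ∈ Finset.range n, ((∑ j ∈ Finset.range n, stdBasis j) i)^2 = 1 := by
    intro i hi
    rw [sum_stdBasis_apply]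
    simp [Finset.mem_range.mp hi]
  rw [Finset.sum_congr rfl this]
  simp

lemma l2norm_stdBasis (j : ℕ) : l2norm (stdBasis j) = 1 := by
  unfold l2norm
  rw [tsum_eq_single j (by intro b hb; simp [stdBasis, Pi.single_apply, hb])]
  simp [stdBasis]

lemma KP_stdBasis (j : ℕ) : KP (stdBasis j) = 0 := by
  funext i
  simp only [KP]
  rw [l2norm_stdBasis]
  by_cases h : i = j <;> simp [stdBasis, Pi.single_apply, h]

lemma log_sqrt_nonneg (n : ℕ) : 0 ≤ Real.log (Real.sqrt n) := by
  rcases Nat.eq_zero_or_pos n with h | h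
  · simp [h]
  · apply Real.log_nonneg
    rw [show (1:ℝ) = Real.sqrt 1 by simp]
    exact Real.sqrt_le_sqrt (by exact_mod_cast h)

lemma main_norm (n : ℕ) :
    l2norm (KP (∑ j ∈ Finset.range n, stdBasis j)) = Real.sqrt n * Real.log (Real.sqrt n) := by
  have hKP : ∀ i, KP (∑ j ∈ Finset.range n, stdBasis j) i
      = if i < n then -Real.log (Real.sqrt n) else 0 := by
    intro i
    simp only [KP, l2norm_sum, sum_stdBasis_apply]
    by_cases h : i < n
    · simp only [h, if_true, one_mul, abs_one]
      rw [Real.log_div one_ne_zero]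
      · simp
      · rcases Nat.eq_zero_or_pos n with h0 | h0
        · omega
        · positivity
    · simp [h]
  unfold l2norm
  have h1 : ∀ i ∉ Finset.range n, (KP (∑ j ∈ Finset.range n, stdBasis j) i)^2 = 0 := by
    intro i hi
    rw [hKP]
    simp [Finset.mem_range.not.mp hi]
  rw [tsum_eq_sum h1]
  have h2 : ∀ i ∈ Finset.range n, (KP (∑ j ∈ Finset.range n, stdBasis j) i)^2
      = (Real.log (Real.sqrt n))^2 := by
    intro i hi
    rw [hKP]
    simp [Finset.mem_range.mp hi]
  rw [Finset.sum_congr rfl h2, Finset.sum_const, Finset.card_range, nsmul_eq_mul]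
  rw [Real.sqrt_mul (by positivity), Real.sqrt_sq (log_sqrt_nonneg n)]

theorem stmt0 (n : ℕ) :
    l2norm (KP (∑ j ∈ Finset.range n, stdBasis j)) = Real.sqrt n * Real.log (Real.sqrt n) ∧
    (∀ j < n, KP (stdBasis j) = 0) ∧
    l2norm (KP (∑ j ∈ Finset.range n, stdBasis j) - ∑ j ∈ Finset.range n, KP (stdBasis j))
      = Real.sqrt n * Real.log (Real.sqrt n) := by
  refine ⟨main_norm n, fun j _ => KP_stdBasis j, ?_⟩
  have : (∑ j ∈ Finset.range n, KP (stdBasis j)) = 0 := by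
    apply Finset.sum_eq_zero
    intro j _
    exact KP_stdBasis j
  rw [this, sub_zero]
  exact main_norm n
end

section
/- Let Z be a twisted Hilbert space satisfying the Principle of Small Perturbations. Then the natural quotient map Q : Z → ℓ₂, Q(x,y) = y, is strictly singular: there is no infinite-dimensional closed subspace W of Z on which Q is an isomorphism. -/
/-!
If `Q` were bounded below by `c > 0` on an infinite-dimensional closed subspace `W`, pick in `W`
a sequence equivalent to the unit vector basis of ℓ₂. By the Principle of Small Perturbations a
subsequence `w_j` lies within `2^{-j}` of norm-one vectors `y_j ∈ ker Q`. Then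
`‖Q w_j‖ = ‖Q (w_j - y_j)‖ ≤ ‖Q‖ 2^{-j}` while `‖w_j‖ ≥ 1 - 2^{-j}`, so `c (1 - 2^{-j}) ≤ ‖Q‖ 2^{-j}`,
and letting `j → ∞` gives `c ≤ 0`.
-/

/-- The separable Hilbert space ℓ₂ of real sequences. -/
noncomputable abbrev Ell2 : Type := lp (fun _ : ℕ => ℝ) 2

/-- A sequence in a normed space is equivalent to the unit vector basis of ℓ₂. -/
def l2Equiv {Z : Type*} [NormedAddCommGroup Z] [NormedSpace ℝ Z] (w : ℕ → Z) : Prop :=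
  ∃ c C : ℝ, 0 < c ∧ ∀ (s : Finset ℕ) (a : ℕ → ℝ),
    c * Real.sqrt (∑ j ∈ s, (a j)^2) ≤ ‖∑ j ∈ s, a j • w j‖ ∧
    ‖∑ j ∈ s, a j • w j‖ ≤ C * Real.sqrt (∑ j ∈ s, (a j)^2)

/-- The Principle of Small Perturbations for a twisted Hilbert space `Z` with quotient
map `Q`: every sequence equivalent to the unit vector basis of ℓ₂ has a subsequence which
is a small perturbation of norm-one elements of `ker Q` (the vectors of the form `(y,0)`). -/
def PSP {Z : Type*} [NormedAddCommGroup Z] [NormedSpace ℝ Z]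
    (Q : Z →L[ℝ] Ell2) : Prop :=
  ∀ w : ℕ → Z, l2Equiv w → ∃ k : ℕ → ℕ, StrictMono k ∧ ∃ y : ℕ → Z,
    (∀ j, Q (y j) = 0) ∧ (∀ j, ‖y j‖ = 1) ∧ ∀ j, ‖w (k j) - y j‖ ≤ (2:ℝ)^(-(j:ℤ))

open Filter Topology

namespace ContinuousLinearMap

variable {E F : Type*} [SeminormedAddCommGroup E] [NormedSpace ℝ E]
  [SeminormedAddCommGroup F] [NormedSpace ℝ F]

theorem mul_one_sub_le_opNorm_mul_of_mem_ker (T : E →L[ℝ] F) {c : ℝ} (hc : 0 ≤ c) {y z : E}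
    (hy : T y = 0) (hy1 : ‖y‖ = 1) (hz : c * ‖z‖ ≤ ‖T z‖) :
    c * (1 - ‖z - y‖) ≤ ‖T‖ * ‖z - y‖ := by
  have hz1 : 1 - ‖z - y‖ ≤ ‖z‖ := by
    have := norm_sub_norm_le y (y - z)
    rw [sub_sub_cancel, hy1, norm_sub_rev] at this
    linarith
  calc c * (1 - ‖z - y‖) ≤ c * ‖z‖ := mul_le_mul_of_nonneg_left hz1 hc
    _ ≤ ‖T z‖ := hz
    _ = ‖T (z - y)‖ := by rw [map_sub, hy, sub_zero]
    _ ≤ ‖T‖ * ‖z - y‖ := T.le_opNorm _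

theorem nonpos_of_tendsto_sub_ker (T : E →L[ℝ] F) {c : ℝ} {y z : ℕ → E}
    (hy : ∀ j, T (y j) = 0) (hy1 : ∀ j, ‖y j‖ = 1) (hz : ∀ j, c * ‖z j‖ ≤ ‖T (z j)‖)
    (hzy : Tendsto (fun j => ‖z j - y j‖) atTop (𝓝 0)) : c ≤ 0 := by
  by_contra! hc
  have hlhs : Tendsto (fun j => c * (1 - ‖z j - y j‖)) atTop (𝓝 (c * (1 - 0))) :=
    (tendsto_const_nhds.sub hzy).const_mul c
  have hrhs : Tendsto (fun j => ‖T‖ * ‖z j - y j‖) atTop (𝓝 (‖T‖ * 0)) := hzy.const_mul _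
  have := le_of_tendsto_of_tendsto hlhs hrhs <| Eventually.of_forall fun j =>
    T.mul_one_sub_le_opNorm_mul_of_mem_ker hc.le (hy j) (hy1 j) (hz j)
  simp only [sub_zero, mul_one, mul_zero] at this
  linarith

end ContinuousLinearMap

theorem tendsto_two_zpow_neg_natCast_atTop :
    Tendsto (fun j : ℕ => (2 : ℝ) ^ (-(j : ℤ))) atTop (𝓝 0) := by
  simpa [zpow_neg, ← inv_pow] using
    tendsto_pow_atTop_nhds_zero_of_lt_one (r := (2 : ℝ)⁻¹) (by norm_num) (by norm_num)

theorem stmt10_general {Z : Type*} [NormedAddCommGroup Z] [NormedSpace ℝ Z]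
    (Q : Z →L[ℝ] Ell2)
    -- every infinite-dimensional closed subspace of a twisted Hilbert space contains a
    -- sequence equivalent to the unit vector basis of ℓ₂
    (hsub : ∀ W : Submodule ℝ Z, IsClosed (W : Set Z) → ¬ FiniteDimensional ℝ W →
      ∃ w : ℕ → Z, (∀ j, w j ∈ W) ∧ l2Equiv w)
    (hpsp : PSP Q) :
    -- Q is strictly singular: it is an isomorphism on no infinite-dimensional closed subspace
    ∀ W : Submodule ℝ Z, IsClosed (W : Set Z) → ¬ FiniteDimensional ℝ W →
      ¬ ∃ c > (0:ℝ), ∀ z ∈ W, c * ‖z‖ ≤ ‖Q z‖ := by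
  rintro W hWc hWfd ⟨c, hc, hQlow⟩
  obtain ⟨w, hwW, hwl2⟩ := hsub W hWc hWfd
  obtain ⟨k, -, y, hyker, hynorm, hclose⟩ := hpsp w hwl2
  have hconv : Tendsto (fun j => ‖w (k j) - y j‖) atTop (𝓝 0) :=
    squeeze_zero (fun _ => norm_nonneg _) hclose tendsto_two_zpow_neg_natCast_atTop
  exact hc.not_ge <|
    Q.nonpos_of_tendsto_sub_ker hyker hynorm (fun j => hQlow _ (hwW (k j))) hconv

theorem stmt10 {Z : Type*} [NormedAddCommGroup Z] [NormedSpace ℝ Z] [CompleteSpace Z]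
    (Q : Z →L[ℝ] Ell2)
    -- twisted Hilbert structure: 0 → ℓ₂ → Z → ℓ₂ → 0
    (jmap : Ell2 →L[ℝ] Z) (hjlow : ∃ c > (0:ℝ), ∀ v, c * ‖v‖ ≤ ‖jmap v‖)
    (hrange : LinearMap.range (jmap : Ell2 →ₗ[ℝ] Z) = LinearMap.ker (Q : Z →ₗ[ℝ] Ell2))
    (hsurj : Function.Surjective Q)
    -- every infinite-dimensional closed subspace of a twisted Hilbert space contains a
    -- sequence equivalent to the unit vector basis of ℓ₂
    (hsub : ∀ W : Submodule ℝ Z, IsClosed (W : Set Z) → ¬ FiniteDimensional ℝ W →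
      ∃ w : ℕ → Z, (∀ j, w j ∈ W) ∧ l2Equiv w)
    (hpsp : PSP Q) :
    -- Q is strictly singular: it is an isomorphism on no infinite-dimensional closed subspace
    ∀ W : Submodule ℝ Z, IsClosed (W : Set Z) → ¬ FiniteDimensional ℝ W →
      ¬ ∃ c > (0:ℝ), ∀ z ∈ W, c * ‖z‖ ≤ ‖Q z‖ :=
  stmt10_general Q hsub hpsp
end

section
/- Suppose a twisted Hilbert space Z with centralizer Ω has the property that for every semi-normalized disjointly supported block sequence (u_j) in ℓ₂ there is a subsequence along which the limit ‖(0, Σ_{j=1}^n b_j e_j)‖_{Z_S} := lim_{ν→∞, ν < k₁ < ⋯ < k_n} [‖Ω(Σ b_j u_{k_j}) − Σ b_j Ω(u_{k_j})‖₂ + ‖Σ b_j u_{k_j}‖₂] defines a norm equivalent to the Kalton-Peck Z₂-norm of (0,b). Then for b = (1,…,1) (n ones), there exist constants α ≤ ‖u_j‖ ≤ β and C₂ > 0 such that for each n there is ν with ‖Ω(Σ_{j=1}^n u_{k_j}) − Σ_{j=1}^n Ω(u_{k_j})‖₂ ≥ (C₂/2)√n log √n − β√n whenever ν ≤ k₁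 < ⋯ < k_n; in particular Ω is maximal. -/
/-- Two sequences are disjointly supported if at each coordinate one of them vanishes. -/
def disjSupp (f g : ℕ → ℝ) : Prop := ∀ n, f n = 0 ∨ g n = 0

/-- The Kalton-Peck map on a finite vector `b`: `K(b)_j = b_j log(|b_j|/‖b‖₂)`. -/
noncomputable def KPfin {n : ℕ} (b : Fin n → ℝ) : Fin n → ℝ :=
  fun j => b j * Real.log (|b j| / Real.sqrt (∑ i, (b i)^2))

/-- The Kalton-Peck Z₂-norm of the vector `(0, b)`:
`‖(0,b)‖_{Z₂} = ‖K(b)‖₂ + ‖b‖₂`. -/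
noncomputable def Z2normFin {n : ℕ} (b : Fin n → ℝ) : ℝ :=
  Real.sqrt (∑ j, (KPfin b j)^2) + Real.sqrt (∑ j, (b j)^2)

/-- Maximal centralizer. -/
def MaxCentralizer (Ω : (ℕ → ℝ) → ℕ → ℝ) : Prop :=
  ∀ u : ℕ → ℕ → ℝ,
    (∃ α > (0:ℝ), ∃ β : ℝ, ∀ j, α ≤ l2norm (u j) ∧ l2norm (u j) ≤ β) →
    (∀ i j, i ≠ j → disjSupp (u i) (u j)) →
    ∃ φ : ℕ → ℕ, StrictMono φ ∧
      ∀ M : ℝ, ∃ N : ℕ, ∀ n, N ≤ n → ∃ ν : ℕ, ∀ k : Fin n → ℕ,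
        StrictMono k → (∀ i, ν ≤ k i) →
        M * Real.sqrt n ≤ l2norm (Ω (∑ j, u (φ (k j))) - ∑ j, Ω (u (φ (k j))))

/-- Along the subsequence `u ∘ φ`, for each `(0,b)`, the limit
`‖(0, Σ b_j e_j)‖_{Z_S} = lim_{ν→∞, ν ≤ k₁ < ⋯ < k_n}
  [‖Ω(Σ b_j u_{k_j}) − Σ b_j Ω(u_{k_j})‖₂ + ‖Σ b_j u_{k_j}‖₂]`
exists and is `C₂`-equivalent to the Kalton-Peck `Z₂`-norm of `(0,b)`. -/
def SpreadEquivZ2 (Ω : (ℕ → ℝ) → ℕ → ℝ) (u : ℕ → ℕ → ℝ) (φ : ℕ → ℕ) : Prop :=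
  ∃ C₂ > (0:ℝ), ∀ (n : ℕ) (b : Fin n → ℝ), ∃ L : ℝ,
    (∀ ε > (0:ℝ), ∃ ν : ℕ, ∀ k : Fin n → ℕ, StrictMono k → (∀ i, ν ≤ k i) →
      |l2norm (Ω (∑ j, b j • u (φ (k j))) - ∑ j, b j • Ω (u (φ (k j)))) +
        l2norm (∑ j, b j • u (φ (k j))) - L| < ε) ∧
    C₂⁻¹ * Z2normFin b ≤ L ∧ L ≤ C₂ * Z2normFin b

/-- A finite sum of reals, at most one of which is nonzero, squares additively. -/
lemma aux_sq_sum_disj {n : ℕ} (v : Fin n → ℝ) (h : ∀ i j, i ≠ j → v i = 0 ∨ v j = 0) :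
    (∑ i, v i)^2 = ∑ i, (v i)^2 := by
  by_cases hz : ∀ i, v i = 0
  · simp [hz]
  · push_neg at hz
    obtain ⟨i₀, hi₀⟩ := hz
    have hall : ∀ i, i ≠ i₀ → v i = 0 := fun i hi => (h i i₀ hi).resolve_right hi₀
    rw [Finset.sum_eq_single i₀ (fun b _ hb => hall b hb) (by simp),
        Finset.sum_eq_single i₀ (fun b _ hb => by rw [hall b hb]; ring) (by simp)]

lemma aux_summable {f : ℕ → ℝ} {α : ℝ} (hα : 0 < α) (h : α ≤ l2norm f) :
    Summable (fun m => (f m)^2) := by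
  by_contra hs
  rw [l2norm, tsum_eq_zero_of_not_summable hs, Real.sqrt_zero] at h
  linarith

lemma aux_l2_sum_le {n : ℕ} (f : Fin n → ℕ → ℝ) {α β : ℝ} (hα : 0 < α) (hβ : 0 ≤ β)
    (hb : ∀ i, α ≤ l2norm (f i) ∧ l2norm (f i) ≤ β)
    (hd : ∀ i j, i ≠ j → disjSupp (f i) (f j)) :
    l2norm (∑ i, f i) ≤ β * Real.sqrt n := by
  have hsum : ∀ i : Fin n, Summable (fun m => (f i m)^2) :=
    fun i => aux_summable hα (hb i).1
  have hpt : ∀ m, ((∑ i, f i) m)^2 = ∑ i, (f i m)^2 := by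
    intro m
    rw [Finset.sum_apply]
    exact aux_sq_sum_disj (fun i => f i m) (fun i j hij => hd i j hij m)
  have htsum : ∑' m, ((∑ i, f i) m)^2 = ∑ i, ∑' m, (f i m)^2 := by
    rw [tsum_congr hpt, Summable.tsum_finsetSum (fun i _ => hsum i)]
  have hle : ∑' m, ((∑ i, f i) m)^2 ≤ (n : ℝ) * β^2 := by
    rw [htsum]
    calc (∑ i, ∑' m, (f i m)^2) ≤ ∑ _i : Fin n, β^2 := by
          apply Finset.sum_le_sum
          intro i _
          have h1 : Real.sqrt (∑' m, (f i m)^2) ≤ β := (hb i).2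
          have h2 : (0:ℝ) ≤ ∑' m, (f i m)^2 := tsum_nonneg (fun m => sq_nonneg _)
          nlinarith [Real.sq_sqrt h2, Real.sqrt_nonneg (∑' m, (f i m)^2)]
      _ = (n : ℝ) * β^2 := by simp [Finset.card_univ, mul_comm]
  rw [l2norm]
  calc Real.sqrt (∑' m, ((∑ i, f i) m)^2) ≤ Real.sqrt ((n : ℝ) * β^2) :=
        Real.sqrt_le_sqrt hle
    _ = β * Real.sqrt n := by
        rw [Real.sqrt_mul (Nat.cast_nonneg n), Real.sqrt_sq hβ, mul_comm]

lemma aux_Z2_eq (n : ℕ) (hn : 1 ≤ n) :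
    Z2normFin (fun _ : Fin n => (1:ℝ)) =
      Real.sqrt n * Real.log (Real.sqrt n) + Real.sqrt n := by
  have hsum : (∑ i : Fin n, ((1:ℝ))^2) = (n : ℝ) := by simp
  have hs1 : (1:ℝ) ≤ Real.sqrt n := by
    rw [show (1:ℝ) = Real.sqrt 1 from Real.sqrt_one.symm]
    exact Real.sqrt_le_sqrt (by exact_mod_cast hn)
  have hL0 : 0 ≤ Real.log (Real.sqrt n) := Real.log_nonneg hs1
  have hKP : ∀ j : Fin n, KPfin (fun _ : Fin n => (1:ℝ)) j = - Real.log (Real.sqrt n) := by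
    intro j
    simp [KPfin, hsum, one_div, Real.log_inv]
  unfold Z2normFin
  have h1 : (∑ j : Fin n, (KPfin (fun _ : Fin n => (1:ℝ)) j)^2)
      = (n : ℝ) * (Real.log (Real.sqrt n))^2 := by
    simp [hKP, Finset.card_univ, mul_comm]
  rw [h1, hsum, Real.sqrt_mul (Nat.cast_nonneg n), Real.sqrt_sq hL0]

theorem stmt18 (Ω : (ℕ → ℝ) → ℕ → ℝ)
    (hyp : ∀ u : ℕ → ℕ → ℝ,
      (∃ α > (0:ℝ), ∃ β : ℝ, ∀ j, α ≤ l2norm (u j) ∧ l2norm (u j) ≤ β) →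
      (∀ i j, i ≠ j → disjSupp (u i) (u j)) →
      ∃ φ : ℕ → ℕ, StrictMono φ ∧ SpreadEquivZ2 Ω u φ) :
    (∀ (u : ℕ → ℕ → ℝ) (α β : ℝ), 0 < α →
      (∀ j, α ≤ l2norm (u j) ∧ l2norm (u j) ≤ β) →
      (∀ i j, i ≠ j → disjSupp (u i) (u j)) →
      ∃ φ : ℕ → ℕ, StrictMono φ ∧ ∃ C₂ > (0:ℝ), ∀ n : ℕ, ∃ ν : ℕ,
        ∀ k : Fin n → ℕ, StrictMono k → (∀ i, ν ≤ k i) →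
          (C₂/2) * Real.sqrt n * Real.log (Real.sqrt n) - β * Real.sqrt n ≤
            l2norm (Ω (∑ j, u (φ (k j))) - ∑ j, Ω (u (φ (k j))))) ∧
    MaxCentralizer Ω := by
  have main : ∀ (u : ℕ → ℕ → ℝ) (α β : ℝ), 0 < α →
      (∀ j, α ≤ l2norm (u j) ∧ l2norm (u j) ≤ β) →
      (∀ i j, i ≠ j → disjSupp (u i) (u j)) →
      ∃ φ : ℕ → ℕ, StrictMono φ ∧ ∃ C₂ > (0:ℝ), ∀ n : ℕ, ∃ ν : ℕ,
        ∀ k : Fin n → ℕ, StrictMono k → (∀ i, ν ≤ k i) →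
          (C₂/2) * Real.sqrt n * Real.log (Real.sqrt n) - β * Real.sqrt n ≤
            l2norm (Ω (∑ j, u (φ (k j))) - ∑ j, Ω (u (φ (k j)))) := by
    intro u α β hα hb hd
    obtain ⟨φ, hφ, C₂, hC₂, hspread⟩ := hyp u ⟨α, hα, β, hb⟩ hd
    have hβ : 0 ≤ β := le_trans hα.le (le_trans (hb 0).1 (hb 0).2)
    refine ⟨φ, hφ, C₂⁻¹, inv_pos.mpr hC₂, ?_⟩
    intro n
    rcases Nat.eq_zero_or_pos n with hn | hn
    · subst hn
      refine ⟨0, fun k _ _ => ?_⟩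
      simp only [Nat.cast_zero, Real.sqrt_zero, mul_zero, zero_mul, sub_zero]
      exact Real.sqrt_nonneg _
    · obtain ⟨L, hlim, hL1, _⟩ := hspread n (fun _ => 1)
      obtain ⟨ν, hν⟩ := hlim C₂⁻¹ (inv_pos.mpr hC₂)
      refine ⟨ν, fun k hk hkν => ?_⟩
      have h1 := hν k hk hkν
      simp only [one_smul] at h1
      have hB : l2norm (∑ j, u (φ (k j))) ≤ β * Real.sqrt n := by
        refine aux_l2_sum_le (fun i => u (φ (k i))) hα hβ (fun i => hb _) ?_
        intro i j hij
        exact hd (φ (k i)) (φ (k j)) (fun h => hij ((hφ.comp hk).injective h))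
      have hZ2 := aux_Z2_eq n hn
      rw [hZ2] at hL1
      have habs := (abs_lt.mp h1).1
      have hs1 : (1:ℝ) ≤ Real.sqrt n := by
        rw [show (1:ℝ) = Real.sqrt 1 from Real.sqrt_one.symm]
        exact Real.sqrt_le_sqrt (by exact_mod_cast hn)
      have hL0 : 0 ≤ Real.log (Real.sqrt n) := Real.log_nonneg hs1
      have hc : (0:ℝ) < C₂⁻¹ := inv_pos.mpr hC₂
      nlinarith [mul_nonneg (mul_nonneg hc.le hL0) (le_trans zero_le_one hs1),
        mul_nonneg hc.le (by linarith : (0:ℝ) ≤ Real.sqrt n - 1)]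
  refine ⟨main, ?_⟩
  intro u hbdd hd
  obtain ⟨α, hα, β, hb⟩ := hbdd
  obtain ⟨φ, hφ, C', hC', hmain⟩ := main u α β hα hb hd
  refine ⟨φ, hφ, ?_⟩
  intro M
  refine ⟨⌈Real.exp ((M + β) * 4 / C')⌉₊ + 1, ?_⟩
  intro n hn
  obtain ⟨ν, hν⟩ := hmain n
  refine ⟨ν, fun k hk hkν => ?_⟩
  have h1 := hν k hk hkν
  have hn1 : 1 ≤ n := le_trans (Nat.le_add_left 1 _) hn
  have hncast : Real.exp ((M + β) * 4 / C') ≤ (n:ℝ) := by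
    calc Real.exp ((M + β) * 4 / C') ≤ (⌈Real.exp ((M + β) * 4 / C')⌉₊ : ℝ) := Nat.le_ceil _
      _ ≤ (n : ℝ) := by exact_mod_cast le_trans (Nat.le_succ _) hn
  have hnpos : (0:ℝ) < (n:ℝ) := by exact_mod_cast hn1
  have hlog : (M + β) * 4 / C' ≤ Real.log n := (Real.le_log_iff_exp_le hnpos).mpr hncast
  have hlogsqrt : Real.log (Real.sqrt n) = Real.log n / 2 := Real.log_sqrt (Nat.cast_nonneg n)
  refine le_trans ?_ h1
  rw [hlogsqrt]
  have hs : (0:ℝ) ≤ Real.sqrt n := Real.sqrt_nonneg n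
  have key : M + β ≤ (C'/2) * (Real.log n / 2) := by
    rw [div_le_iff₀ hC'] at hlog
    nlinarith
  nlinarith [mul_le_mul_of_nonneg_right key hs]
end
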